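/- Let ℬ = ⟨B_1, …, B_m⟩ ≤ M(n, 𝔽) be triangularizable over an extension field 𝔽' (i.e., B_i = D B_i' C⁻¹ with C, D ∈ GL(n, 𝔽') and each B_i' upper triangular). Suppose there exist j ∈ [m] and a nonzero subspace U ≤ 𝔽ⁿ with B_j(U) = ℬ(U) and dim(U) = dim(B_j(U)). Then the induced matrix space ℬ* = ⟨B_1*, …, B_m*⟩ of maps 𝔽ⁿ/U → 𝔽ⁿ/ℬ(U) is triangularizable over 𝔽'. -/

import Mathlib

/-!
Over `F'`, let `V_i` and `W_i` be the flags triangularizing `ℬ`, and push them forward along the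
quotient maps `π : F'ⁿ → F'ⁿ/U` and `π' : F'ⁿ → F'ⁿ/ℬ(U)`. The images `π(V_i)` grow by at most
one dimension at a time, so a subsequence of them is a complete flag of `F'ⁿ/U`. Since `B_j`
maps `U` injectively into `ℬ(U)`, it maps `V_i ∩ U` injectively into `W_i ∩ ℬ(U)`, so
`dim π'(W_i) ≤ dim π(V_i)`; along the subsequence the `π'(W_i)` therefore have dimension at most
the index, and can be enlarged to a complete flag of `F'ⁿ/ℬ(U)`.
-/

open Submodule Module

/-- The image of a subspace `U` under a matrix space `A`: the span of all `a u`. -/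
def msImage {F V V' : Type*} [Field F] [AddCommGroup V] [Module F V]
    [AddCommGroup V'] [Module F V']
    (A : Submodule F (V →ₗ[F] V')) (U : Submodule F V) : Submodule F V' :=
  Submodule.span F {x | ∃ a ∈ A, ∃ u ∈ U, a u = x}

/-- A set of linear maps `V → W` (between spaces of dimension `n`) is simultaneously
triangularizable iff there are complete flags of `V` and `W` such that each map sends
the `i`-th member of the first flag into the `i`-th member of the second. -/
def IsTriangularizable (K : Type*) [Field K] {V W : Type*} [AddCommGroup V] [Module K V]
    [AddCommGroup W] [Module K W] (n : ℕ) (S : Set (V →ₗ[K] W)) : Prop :=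
  ∃ (fV : ℕ → Submodule K V) (fW : ℕ → Submodule K W),
    (∀ i, fV i ≤ fV (i + 1)) ∧ (∀ i, fW i ≤ fW (i + 1)) ∧
    fV 0 = ⊥ ∧ fW 0 = ⊥ ∧ fV n = ⊤ ∧ fW n = ⊤ ∧
    (∀ i ≤ n, finrank K (fV i) = i) ∧ (∀ i ≤ n, finrank K (fW i) = i) ∧
    ∀ f ∈ S, ∀ i, Submodule.map f (fV i) ≤ fW i

section Flags

variable {K X Y : Type*} [Field K] [AddCommGroup X] [Module K X] [AddCommGroup Y] [Module K Y]

theorem Submodule.finrank_map_add_finrank_inf_ker [FiniteDimensional K X] (f : X →ₗ[K] Y)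
    (p : Submodule K X) :
    finrank K (p.map f) + finrank K (p ⊓ LinearMap.ker f : Submodule K X) = finrank K p := by
  have h := LinearMap.finrank_range_add_finrank_ker (f.domRestrict p)
  rw [LinearMap.range_domRestrict, LinearMap.ker_domRestrict] at h
  rwa [← Submodule.finrank_map_subtype_eq p (comap p.subtype (LinearMap.ker f)),
    Submodule.map_comap_subtype] at h

theorem Submodule.finrank_map_add_finrank_le [FiniteDimensional K X] (f : X →ₗ[K] Y)
    {p p' : Submodule K X} (h : p ≤ p') :
    finrank K (p'.map f) + finrank K p ≤ finrank K (p.map f) + finrank K p' := by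
  have hp := p.finrank_map_add_finrank_inf_ker f
  have hp' := p'.finrank_map_add_finrank_inf_ker f
  have hker := Submodule.finrank_mono (inf_le_inf_right (LinearMap.ker f) h)
  omega

theorem Submodule.finrank_le_of_disjoint_ker [FiniteDimensional K X] {f : X →ₗ[K] Y}
    [FiniteDimensional K Y] {p : Submodule K X} {q : Submodule K Y}
    (hp : Disjoint p (LinearMap.ker f)) (hpq : p.map f ≤ q) :
    finrank K p ≤ finrank K q := by
  have h := p.finrank_map_add_finrank_inf_ker f
  rw [hp.eq_bot, finrank_bot] at h
  exact h ▸ Submodule.finrank_mono hpq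

-- `s` embeds the part of `p` killed by `π` into the part of `p'` killed by `π'`.
theorem Submodule.finrank_map_le_finrank_map_of_disjoint_ker {X' Y' : Type*}
    [AddCommGroup X'] [Module K X'] [AddCommGroup Y'] [Module K Y']
    [FiniteDimensional K X] [FiniteDimensional K Y] {π : X →ₗ[K] X'} {π' : Y →ₗ[K] Y'}
    {s : X →ₗ[K] Y} (hinj : Disjoint (LinearMap.ker π) (LinearMap.ker s))
    (hker : (LinearMap.ker π).map s ≤ LinearMap.ker π') {p : Submodule K X}
    {p' : Submodule K Y} (hpp' : p.map s ≤ p') (hrank : finrank K p' = finrank K p) :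
    finrank K (p'.map π') ≤ finrank K (p.map π) := by
  have hp := p.finrank_map_add_finrank_inf_ker π
  have hp' := p'.finrank_map_add_finrank_inf_ker π'
  have hkers := Submodule.finrank_le_of_disjoint_ker (hinj.mono_left inf_le_right)
    (le_inf ((map_mono inf_le_left).trans hpp') ((map_mono inf_le_right).trans hker))
  omega

theorem Submodule.exists_le_le_finrank_eq [FiniteDimensional K X] {p q : Submodule K X}
    (hpq : p ≤ q) {d : ℕ} (hpd : finrank K p ≤ d) (hdq : d ≤ finrank K q) :
    ∃ r : Submodule K X, p ≤ r ∧ r ≤ q ∧ finrank K r = d := by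
  obtain ⟨e, rfl⟩ := Nat.exists_eq_add_of_le hpd
  induction e generalizing p with
  | zero => exact ⟨p, le_rfl, hpq, rfl⟩
  | succ e ih =>
    obtain ⟨x, hxq, hxp⟩ := SetLike.exists_of_lt (hpq.lt_of_ne (by rintro rfl; omega))
    have hx := Submodule.finrank_sup_span_singleton hxp
    obtain ⟨r, hpr, hrq, hr⟩ := ih (sup_le hpq ((span_singleton_le_iff_mem x q).mpr hxq))
      (by omega) (by omega)
    exact ⟨r, le_sup_left.trans hpr, hrq, by omega⟩

theorem exists_flag_le_of_finrank_le [FiniteDimensional K Y] (q : ℕ → Submodule K Y)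
    (hq : Monotone q) (ℓ : ℕ) (hqk : ∀ k ≤ ℓ, finrank K (q k) ≤ k) (W : Submodule K Y)
    (hW : finrank K W = ℓ) (hqW : q ℓ ≤ W) :
    ∃ g : ℕ → Submodule K Y, Monotone g ∧ (∀ k ≤ ℓ, finrank K (g k) = k ∧ q k ≤ g k) ∧
      ∀ k, ℓ ≤ k → g k = W := by
  induction ℓ generalizing W with
  | zero =>
    refine ⟨fun _ => W, monotone_const, fun k hk => ?_, fun _ _ => rfl⟩
    obtain rfl := Nat.le_zero.mp hk
    exact ⟨hW, hqW⟩
  | succ ℓ ih =>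
    obtain ⟨W', hqW', hW'W, hW'⟩ := Submodule.exists_le_le_finrank_eq
      ((hq ℓ.le_succ).trans hqW) (hqk ℓ ℓ.le_succ) (hW ▸ ℓ.le_succ)
    obtain ⟨g, hg, hgk, hgW'⟩ := ih (fun k hk => hqk k (by omega)) W' hW' hqW'
    obtain ⟨G, hG⟩ : ∃ G : ℕ → Submodule K Y, ∀ k, G k = if k ≤ ℓ then g k else W :=
      ⟨_, fun _ => rfl⟩
    refine ⟨G, fun a b hab => ?_, fun k hk => ?_, fun k hk => ?_⟩
    · rw [hG, hG]
      split_ifs with ha hb hb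
      · exact hg hab
      · exact (hg ha).trans ((hgW' ℓ le_rfl).le.trans hW'W)
      · omega
      · exact le_rfl
    · by_cases hkℓ : k ≤ ℓ
      · rw [hG, if_pos hkℓ]
        exact hgk k hkℓ
      · obtain rfl : k = ℓ + 1 := by omega
        rw [hG, if_neg hkℓ]
        exact ⟨hW, hqW⟩
    · rw [hG, if_neg (by omega)]

theorem isTriangularizable_of_flag_of_finrank_le [FiniteDimensional K X] [FiniteDimensional K Y]
    {ℓ : ℕ} (hX : finrank K X = ℓ) (hY : finrank K Y = ℓ) {S : Set (X →ₗ[K] Y)}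
    (p : ℕ → Submodule K X) (hp : Monotone p) (hpk : ∀ k ≤ ℓ, finrank K (p k) = k)
    (q : ℕ → Submodule K Y) (hq : Monotone q) (hqk : ∀ k ≤ ℓ, finrank K (q k) ≤ k)
    (hS : ∀ f ∈ S, ∀ k, (p k).map f ≤ q k) :
    IsTriangularizable K ℓ S := by
  obtain ⟨g, hg, hgk, hgℓ⟩ :=
    exists_flag_le_of_finrank_le q hq ℓ hqk ⊤ (finrank_top K Y ▸ hY) le_top
  refine ⟨p, g, fun i => hp i.le_succ, fun i => hg i.le_succ,
    Submodule.finrank_eq_zero.mp (hpk 0 ℓ.zero_le), Submodule.finrank_eq_zero.mp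
      (hgk 0 ℓ.zero_le).1, Submodule.eq_top_of_finrank_eq ((hpk ℓ le_rfl).trans hX.symm),
    hgℓ ℓ le_rfl, hpk, fun k hk => (hgk k hk).1, fun f hf k => ?_⟩
  rcases le_total k ℓ with hk | hk
  · exact (hS f hf k).trans (hgk k hk).2
  · exact (hgℓ k hk).symm ▸ le_top

end Flags

theorem exists_monotone_index_of_le_succ {a : ℕ → ℕ} {N ℓ : ℕ} (h0 : a 0 = 0)
    (hstep : ∀ i < N, a (i + 1) ≤ a i + 1) (hN : ℓ ≤ a N) :
    ∃ I : ℕ → ℕ, Monotone I ∧ ∀ k ≤ ℓ, I k ≤ N ∧ a (I k) = k := by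
  classical
  have hex : ∀ k, ∃ i, min k ℓ ≤ a i := fun k => ⟨N, (min_le_right k ℓ).trans hN⟩
  refine ⟨fun k => Nat.find (hex k),
    fun k k' hkk' => Nat.find_mono fun i hi => (min_le_min_right ℓ hkk').trans hi,
    fun k hk => ?_⟩
  dsimp only
  have hspec := Nat.find_spec (hex k)
  have hmin : ∀ t < Nat.find (hex k), ¬min k ℓ ≤ a t := fun t => Nat.find_min (hex k)
  have hiN := Nat.find_min' (hex k) ((min_le_right k ℓ).trans hN)
  generalize Nat.find (hex k) = i at hspec hmin hiN ⊢
  rw [min_eq_left hk] at hspec hmin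
  refine ⟨hiN, le_antisymm ?_ hspec⟩
  cases i with
  | zero => exact h0.le.trans k.zero_le
  | succ t =>
    have := hmin t t.lt_succ_self
    have := hstep t hiN
    omega

theorem IsTriangularizable.descend {K X Y X' Y' ι : Type*} [Field K]
    [AddCommGroup X] [Module K X] [AddCommGroup Y] [Module K Y]
    [AddCommGroup X'] [Module K X'] [AddCommGroup Y'] [Module K Y']
    [FiniteDimensional K X] [FiniteDimensional K Y]
    [FiniteDimensional K X'] [FiniteDimensional K Y']
    {S : ι → X →ₗ[K] Y} {T : ι → X' →ₗ[K] Y'} {π : X →ₗ[K] X'} {π' : Y →ₗ[K] Y'}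
    (hπ : Function.Surjective π) (hST : ∀ i, π' ∘ₗ S i = T i ∘ₗ π)
    {n : ℕ} (htri : IsTriangularizable K n (Set.range S)) (j : ι)
    (hinj : Disjoint (LinearMap.ker π) (LinearMap.ker (S j)))
    (hker : (LinearMap.ker π).map (S j) ≤ LinearMap.ker π')
    (hdim : finrank K Y' = finrank K X') :
    IsTriangularizable K (finrank K X') (Set.range T) := by
  obtain ⟨fV, fW, hfV, hfW, hfV0, -, hfVn, -, hfVk, hfWk, hS⟩ := htri
  set qV : ℕ → Submodule K X' := fun i => (fV i).map π
  set qW : ℕ → Submodule K Y' := fun i => (fW i).map π'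
  have hstep : ∀ i < n, finrank K (qV (i + 1)) ≤ finrank K (qV i) + 1 := fun i hi => by
    have h : finrank K (qV (i + 1)) + finrank K (fV i) ≤
        finrank K (qV i) + finrank K (fV (i + 1)) :=
      Submodule.finrank_map_add_finrank_le π (hfV i)
    rw [hfVk i hi.le, hfVk (i + 1) hi] at h
    omega
  have hqVn : finrank K (qV n) = finrank K X' := by
    show finrank K ((fV n).map π) = _
    rw [hfVn, Submodule.map_top, LinearMap.range_eq_top.mpr hπ, finrank_top]
  obtain ⟨I, hI, hIk⟩ := exists_monotone_index_of_le_succ (a := fun i => finrank K (qV i))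
    (by simp [qV, hfV0]) hstep hqVn.ge
  refine isTriangularizable_of_flag_of_finrank_le rfl hdim (qV ∘ I)
    ((monotone_nat_of_le_succ fun i => map_mono (hfV i)).comp hI) (fun k hk => (hIk k hk).2)
    (qW ∘ I) ((monotone_nat_of_le_succ fun i => map_mono (hfW i)).comp hI)
    (fun k hk => ?_) fun _ ⟨i, hi⟩ k => ?_
  · have hIn := (hIk k hk).1
    exact (Submodule.finrank_map_le_finrank_map_of_disjoint_ker hinj hker (hS _ ⟨j, rfl⟩ _)
      ((hfWk _ hIn).trans (hfVk _ hIn).symm)).trans_eq (hIk k hk).2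
  · subst hi
    show ((fV (I k)).map π).map (T i) ≤ (fW (I k)).map π'
    rw [← map_comp, ← hST i, map_comp]
    exact map_mono (hS _ ⟨i, rfl⟩ _)

theorem Submodule.baseChange_map {R A M N : Type*} [CommSemiring R] [CommSemiring A] [Algebra R A]
    [AddCommMonoid M] [Module R M] [AddCommMonoid N] [Module R N]
    (f : M →ₗ[R] N) (p : Submodule R M) :
    (p.map f).baseChange A = (p.baseChange A).map (f.baseChange A) := by
  simp only [Submodule.baseChange_eq_span, Submodule.map_span, Submodule.map_coe,
    Set.image_image, TensorProduct.mk_apply, LinearMap.baseChange_tmul]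

theorem LinearMap.ker_baseChange_mkQ {R A M : Type*} [CommRing R] [CommRing A] [Algebra R A]
    [Module.Flat R A] [AddCommGroup M] [Module R M] (p : Submodule R M) :
    LinearMap.ker (p.mkQ.baseChange A) = p.baseChange A := by
  ext x
  exact (Module.Flat.lTensor_exact A (LinearMap.exact_subtype_mkQ p) x)

theorem Submodule.finrank_baseChange {F F' M : Type*} [Field F] [Field F'] [Algebra F F']
    [AddCommGroup M] [Module F M] (p : Submodule F M) :
    finrank F' (p.baseChange F') = finrank F p := by
  rw [Submodule.baseChange, LinearMap.finrank_range_of_inj, Module.finrank_baseChange]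
  rw [LinearMap.baseChange_eq_ltensor]
  exact Module.Flat.lTensor_preserves_injective_linearMap _ p.injective_subtype

theorem stmt16_general (F F' : Type*) [Field F] [Field F'] [Algebra F F'] (n m : ℕ)
    (B : Fin m → ((Fin n → F) →ₗ[F] (Fin n → F)))
    -- ℬ = ⟨B_1, …, B_m⟩ is triangularizable over the extension field F'
    (htri : IsTriangularizable F' n
      (Set.range fun i => LinearMap.baseChange F' (B i)))
    (j : Fin m) (U : Submodule F (Fin n → F))
    (hBU : Submodule.map (B j) U = msImage (Submodule.span F (Set.range B)) U)
    (hdim : finrank F U = finrank F (Submodule.map (B j) U))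
    (hsub : ∀ i, U ≤ (msImage (Submodule.span F (Set.range B)) U).comap (B i)) :
    -- the induced matrix space ℬ* on the quotients is triangularizable over F'
    IsTriangularizable F' (finrank F ((Fin n → F) ⧸ U))
      (Set.range fun i => LinearMap.baseChange F'
        (Submodule.mapQ U (msImage (Submodule.span F (Set.range B)) U) (B i) (hsub i))) := by
  set BU := msImage (Submodule.span F (Set.range B)) U
  have hBUbc : (U.baseChange F').map ((B j).baseChange F') = BU.baseChange F' := by
    rw [← Submodule.baseChange_map, hBU]
  have hrank : finrank F BU = finrank F U := hBU ▸ hdim.symm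
  rw [← Module.finrank_baseChange (R := F')]
  refine htri.descend (π := U.mkQ.baseChange F') (π' := BU.mkQ.baseChange F')
    (LinearMap.baseChange_surjective F' U.mkQ_surjective)
    (fun i => by rw [← LinearMap.baseChange_comp, ← LinearMap.baseChange_comp, mapQ_mkQ]) j
    ?_ ?_ ?_
  · refine Submodule.disjoint_ker_of_finrank_le _ ?_
    rw [LinearMap.ker_baseChange_mkQ, hBUbc, Submodule.finrank_baseChange,
      Submodule.finrank_baseChange, hrank]
  · rw [LinearMap.ker_baseChange_mkQ, LinearMap.ker_baseChange_mkQ, hBUbc]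
  · rw [Module.finrank_baseChange, Module.finrank_baseChange, finrank_quotient, finrank_quotient,
      hrank]

theorem stmt16 (F F' : Type*) [Field F] [Field F'] [Algebra F F'] (n m : ℕ)
    (B : Fin m → ((Fin n → F) →ₗ[F] (Fin n → F)))
    -- ℬ = ⟨B_1, …, B_m⟩ is triangularizable over the extension field F'
    (htri : IsTriangularizable F' n
      (Set.range fun i => LinearMap.baseChange F' (B i)))
    (j : Fin m) (U : Submodule F (Fin n → F)) (hU : U ≠ ⊥)
    (hBU : Submodule.map (B j) U = msImage (Submodule.span F (Set.range B)) U)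
    (hdim : finrank F U = finrank F (Submodule.map (B j) U))
    (hsub : ∀ i, U ≤ (msImage (Submodule.span F (Set.range B)) U).comap (B i)) :
    -- the induced matrix space ℬ* on the quotients is triangularizable over F'
    IsTriangularizable F' (finrank F ((Fin n → F) ⧸ U))
      (Set.range fun i => LinearMap.baseChange F'
        (Submodule.mapQ U (msImage (Submodule.span F (Set.range B)) U) (B i) (hsub i))) :=
  stmt16_general F F' n m B htri j U hBU hdim hsub
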